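/- arXiv:2211.10993 — 4 statements merged into one kernel-verified Lean document; each statement's English description precedes it below -/
import Mathlib

section
/- For a rational polyhedral cone σ in N_ℝ, the set S_σ = σ∨ ∩ M of lattice points of the dual cone is a finitely generated affine semigroup (Gordan's Lemma). -/
open Matrix

/-- The point has integer coordinates, i.e. lies in the lattice `ℤⁿ ⊆ ℝⁿ`. -/
def IsLatticePt {n : ℕ} (x : Fin n → ℝ) : Prop := ∀ i, ∃ z : ℤ, x i = (z : ℝ)

/-- The convex polyhedral cone generated by a set: all finite nonnegative combinations. -/
def coneGen {V : Type*} [AddCommMonoid V] [Module ℝ V] (S : Set V) : Set V :=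
  {x | ∃ (t : Finset V) (c : V → ℝ), ↑t ⊆ S ∧ (∀ v ∈ t, 0 ≤ c v) ∧ x = ∑ v ∈ t, c v • v}

/-- The dual cone with respect to the standard pairing. -/
def dualCone {n : ℕ} (σ : Set (Fin n → ℝ)) : Set (Fin n → ℝ) :=
  {m | ∀ u ∈ σ, 0 ≤ m ⬝ᵥ u}

/-!
Write a lattice point `y` as `y⁺ - y⁻` with `y⁺, y⁻ ∈ ℕⁿ`, and introduce a slack variable
`s_j = ⟪w_j, y⟫ ≥ 0` for each integral generator `w_j` of `σ`. The lattice points of `σ∨` are then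
the image of the monoid of solutions `(y⁺, y⁻, s) ∈ ℕ^(2n + k)` of the linear equations
`s_j = ⟪w_j, y⁺ - y⁻⟫`. Such a solution monoid is generated by its minimal nonzero elements, of
which there are finitely many by Dickson's lemma.
-/

theorem AddSubmonoid.fg_comap_nonneg {κ ι : Type*} [Finite κ] [Finite ι]
    (ℓ : (κ → ℤ) →+ (ι → ℤ)) : ((AddSubmonoid.nonneg (ι → ℤ)).comap ℓ).FG := by
  let diff : ((κ ⊕ κ) ⊕ ι → ℕ) →+ (κ → ℤ) :=
    AddMonoidHom.mk' (fun e k => e (.inl (.inl k)) - e (.inl (.inr k)))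
      (by intros; ext; simp only [Pi.add_apply, Nat.cast_add]; ring)
  let slack : ((κ ⊕ κ) ⊕ ι → ℕ) →+ (ι → ℤ) :=
    AddMonoidHom.mk' (fun e j => e (.inr j)) (by intros; ext; simp)
  suffices h : ((ℓ.comp diff).eqLocusM slack).map diff = (AddSubmonoid.nonneg _).comap ℓ from
    h ▸ (AddSubmonoid.fg_eqLocusM _ _).map diff
  ext y
  constructor
  · rintro ⟨e, he, rfl⟩ j
    have : ℓ (diff e) = slack e := he
    simp [this, slack]
  · intro hy
    let e : (κ ⊕ κ) ⊕ ι → ℕ :=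
      Sum.elim (Sum.elim (fun k => (y k).toNat) fun k => (-y k).toNat) fun j => (ℓ y j).toNat
    have hdiff : diff e = y := by ext k; simp [diff, e]
    refine ⟨e, ?_, hdiff⟩
    show ℓ (diff e) = slack e
    ext j
    simp [hdiff, slack, e, Int.toNat_of_nonneg (hy j)]

theorem mem_dualCone_coneGen_iff {n : ℕ} {S : Set (Fin n → ℝ)} {m : Fin n → ℝ} :
    m ∈ dualCone (coneGen S) ↔ ∀ s ∈ S, 0 ≤ m ⬝ᵥ s := by
  constructor
  · intro h s hs
    exact h s ⟨{s}, fun _ => 1, by simpa using hs, by simp, by simp⟩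
  · rintro h u ⟨t, c, hts, hc, rfl⟩
    rw [dotProduct_sum]
    exact Finset.sum_nonneg fun v hv => by
      rw [dotProduct_smul, smul_eq_mul]
      exact mul_nonneg (hc v hv) (h v (hts hv))

theorem isLatticePt_iff_mem_range {n : ℕ} {x : Fin n → ℝ} :
    IsLatticePt x ↔ x ∈ Set.range ((Int.castAddHom ℝ).compLeft (Fin n)) := by
  simp [IsLatticePt, Classical.skolem, funext_iff, eq_comm]

theorem setOf_isLatticePt_mem_dualCone_coneGen_range {n : ℕ} {ι : Type*} (w : ι → Fin n → ℤ) :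
    {x ∈ dualCone (coneGen (Set.range fun j => (Int.castAddHom ℝ).compLeft (Fin n) (w j))) |
        IsLatticePt x} =
      ((AddSubmonoid.nonneg (ι → ℤ)).comap (Matrix.of w).mulVecLin.toAddMonoidHom).map
        ((Int.castAddHom ℝ).compLeft (Fin n)) := by
  ext x
  simp only [Set.mem_ofPred_eq, mem_dualCone_coneGen_iff, Set.forall_mem_range,
    isLatticePt_iff_mem_range, AddSubmonoid.coe_map, AddSubmonoid.coe_comap]
  have hpair (y : Fin n → ℤ) (j : ι) :
      (Int.castAddHom ℝ).compLeft (Fin n) y ⬝ᵥ (Int.castAddHom ℝ).compLeft (Fin n) (w j) =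
        ((Matrix.of w *ᵥ y) j : ℝ) := by
    rw [mulVec, dotProduct_comm, ← eq_intCast (Int.castRingHom ℝ), RingHom.map_dotProduct]
    rfl
  constructor
  · rintro ⟨hx, y, rfl⟩
    exact ⟨y, fun j => Int.cast_nonneg_iff.1 (hpair y j ▸ hx j), rfl⟩
  · rintro ⟨y, hy, rfl⟩
    exact ⟨fun j => hpair y j ▸ Int.cast_nonneg_iff.2 (hy j), y, rfl⟩

theorem AddSubmonoid.exists_natCast_smul_sum_eq_of_mem_closure {R V : Type*} [Semiring R]
    [AddCommMonoid V] [Module R V] {A : Finset V} {x : V} (hx : x ∈ AddSubmonoid.closure ↑A) :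
    ∃ c : V → ℕ, x = ∑ v ∈ A, (c v : R) • v := by
  obtain ⟨c, -, rfl⟩ := AddSubmonoid.mem_closure_finset.1 hx
  exact ⟨c, by simp only [Nat.cast_smul_eq_nsmul]⟩

/-- Gordan's Lemma: for a rational convex polyhedral cone `σ = Cone(S')` (with `S'`
a finite set of lattice points), the semigroup `S_σ = σ∨ ∩ M` of lattice points of the
dual cone is finitely generated: there is a finite set `A ⊆ S_σ` such that every element
of `S_σ` is a finite `ℕ`-linear combination of elements of `A`. -/
theorem stmt1 {n : ℕ} (S' : Finset (Fin n → ℝ)) (hS' : ∀ x ∈ S', IsLatticePt x) :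
    ∃ A : Finset (Fin n → ℝ),
      (↑A ⊆ {x ∈ dualCone (coneGen (S' : Set (Fin n → ℝ))) | IsLatticePt x}) ∧
      ∀ x ∈ {x ∈ dualCone (coneGen (S' : Set (Fin n → ℝ))) | IsLatticePt x},
        ∃ c : (Fin n → ℝ) → ℕ, x = ∑ v ∈ A, (c v : ℝ) • v := by
  choose w hw using fun s : S' => isLatticePt_iff_mem_range.1 (hS' s s.2)
  have hS'_eq : Set.range (fun s => (Int.castAddHom ℝ).compLeft (Fin n) (w s)) = ↑S' := by
    simp [hw]
  obtain ⟨A, hA⟩ := (AddSubmonoid.fg_comap_nonneg (Matrix.of w).mulVecLin.toAddMonoidHom).map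
    ((Int.castAddHom ℝ).compLeft (Fin n))
  rw [← hS'_eq, setOf_isLatticePt_mem_dualCone_coneGen_range, ← hA]
  exact ⟨A, AddSubmonoid.subset_closure, fun x hx =>
    AddSubmonoid.exists_natCast_smul_sum_eq_of_mem_closure hx⟩
end

section
/- With notation as in the previous context, if 𝒜 is the set consisting of the vectors (0, e_i) for i=1,…,k together with all (v, φ(v)) where (v,w) ranges over a generating set 𝓗 of the semigroup σ̃∨ ∩ ℤ^{n+k} with v ≠ 0, then 𝒜 generates σ̃∨ ∩ ℤ^{n+k} as a semigroup (ℕ𝒜 = σ̃∨ ∩ ℤ^{n+k}). -/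
open Matrix Pointwise

/-- The set of finite `ℕ`-linear combinations of elements of `A` (i.e. `ℕA`). -/
def natGen {V : Type*} [AddCommMonoid V] (A : Set V) : Set V :=
  {x | ∃ (t : Finset V) (c : V → ℕ), ↑t ⊆ A ∧ x = ∑ v ∈ t, c v • v}

/-- The dual cone in `ℝⁿ × ℝᵏ` with respect to the standard pairing. -/
def dualConeNK {n k : ℕ} (σ : Set ((Fin n → ℝ) × (Fin k → ℝ))) :
    Set ((Fin n → ℝ) × (Fin k → ℝ)) :=
  {m | ∀ u ∈ σ, 0 ≤ m.1 ⬝ᵥ u.1 + m.2 ⬝ᵥ u.2}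

/-- `max ⟨c, −A⟩`. -/
noncomputable def eta0 {n : ℕ} (A : Set (Fin n → ℝ)) (c : Fin n → ℝ) : ℝ :=
  sSup ((fun q => c ⬝ᵥ (-q)) '' A)

/-- `φ(v) = Σ_i max⟨v, −M_i⟩ e_i` as a vector in `ℝᵏ`. -/
noncomputable def phiMap {n k : ℕ} (M : Fin k → Set (Fin n → ℝ)) (v : Fin n → ℝ) :
    Fin k → ℝ :=
  fun i => eta0 (M i) v


lemma isInt_sum {ι : Type*} {t : Finset ι} {f : ι → ℝ} (h : ∀ p ∈ t, ∃ z : ℤ, f p = (z : ℝ)) :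
    ∃ z : ℤ, ∑ p ∈ t, f p = (z : ℝ) := by
  induction t using Finset.cons_induction with
  | empty => exact ⟨0, by simp⟩
  | cons a s ha ih =>
    obtain ⟨za, hza⟩ := h a (Finset.mem_cons_self _ _)
    obtain ⟨zs, hzs⟩ := ih fun p hp => h p (Finset.mem_cons.2 (Or.inr hp))
    exact ⟨za + zs, by rw [Finset.sum_cons, hza, hzs]; push_cast; ring⟩
section Aux

open Matrix

lemma natGen_zero' {V : Type*} [AddCommMonoid V] (A : Set V) : (0 : V) ∈ natGen A :=
  ⟨∅, fun _ => 0, by simp, by simp⟩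

lemma smul_mem_natGen' {V : Type*} [AddCommMonoid V] {A : Set V} {a : V} (ha : a ∈ A) (c : ℕ) :
    c • a ∈ natGen A :=
  ⟨{a}, fun _ => c, by simpa using ha, by simp⟩

lemma natGen_add' {V : Type*} [AddCommMonoid V] [DecidableEq V] {A : Set V} {x y : V}
    (hx : x ∈ natGen A) (hy : y ∈ natGen A) : x + y ∈ natGen A := by
  obtain ⟨t, c, hts, rfl⟩ := hx
  obtain ⟨u, d, hus, rfl⟩ := hy
  refine ⟨t ∪ u, fun v => (if v ∈ t then c v else 0) + (if v ∈ u then d v else 0), ?_, ?_⟩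
  · intro v hv
    rcases Finset.mem_union.1 (by exact_mod_cast hv) with h | h
    exacts [hts (by exact_mod_cast h), hus (by exact_mod_cast h)]
  · simp only [add_smul]
    rw [Finset.sum_add_distrib]
    congr 1
    · rw [← Finset.sum_subset Finset.subset_union_left
        (fun v _ hv => by rw [if_neg hv, zero_smul])]
      exact Finset.sum_congr rfl fun v hv => by rw [if_pos hv]
    · rw [← Finset.sum_subset Finset.subset_union_right
        (fun v _ hv => by rw [if_neg hv, zero_smul])]
      exact Finset.sum_congr rfl fun v hv => by rw [if_pos hv]

lemma dot_lattice' {n : ℕ} {v w : Fin n → ℝ} (hv : IsLatticePt v) (hw : IsLatticePt w) :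
    ∃ z : ℤ, v ⬝ᵥ w = (z : ℝ) := by
  choose a ha using hv
  choose b hb using hw
  refine ⟨∑ j, a j * b j, ?_⟩
  simp only [dotProduct]
  push_cast
  exact Finset.sum_congr rfl fun j _ => by rw [ha j, hb j]

lemma lattice_add' {n : ℕ} {v w : Fin n → ℝ} (hv : IsLatticePt v) (hw : IsLatticePt w) :
    IsLatticePt (v + w) := by
  intro j
  obtain ⟨a, ha⟩ := hv j
  obtain ⟨b, hb⟩ := hw j
  exact ⟨a + b, by push_cast; rw [Pi.add_apply, ha, hb]⟩

lemma lattice_zero' {n : ℕ} : IsLatticePt (0 : Fin n → ℝ) := fun _ => ⟨0, by simp⟩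

lemma lattice_neg' {n : ℕ} {v : Fin n → ℝ} (hv : IsLatticePt v) : IsLatticePt (-v) := by
  intro j
  obtain ⟨a, ha⟩ := hv j
  exact ⟨-a, by push_cast; rw [Pi.neg_apply, ha]⟩

lemma dot_neg_linear' {n : ℕ} (v : Fin n → ℝ) :
    IsLinearMap ℝ (fun x : Fin n → ℝ => v ⬝ᵥ (-x)) := by
  constructor
  · intro x y; rw [neg_add, dotProduct_add]
  · intro c x; rw [← smul_neg, dotProduct_smul]

lemma hull_le_sup'' {n : ℕ} (C : Finset (Fin n → ℝ)) (hne : C.Nonempty) (v q : Fin n → ℝ)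
    (hq : q ∈ convexHull ℝ (C : Set (Fin n → ℝ))) :
    v ⬝ᵥ (-q) ≤ C.sup' hne (fun q => v ⬝ᵥ (-q)) := by
  have hconv : Convex ℝ {x : Fin n → ℝ | v ⬝ᵥ (-x) ≤ C.sup' hne (fun q => v ⬝ᵥ (-q))} :=
    convex_halfSpace_le (dot_neg_linear' v) _
  have hsub : convexHull ℝ (C : Set (Fin n → ℝ)) ⊆
      {x : Fin n → ℝ | v ⬝ᵥ (-x) ≤ C.sup' hne (fun q => v ⬝ᵥ (-q))} :=
    convexHull_min (fun x hx => by exact Finset.le_sup' (fun q => v ⬝ᵥ (-q)) hx) hconv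
  exact hsub hq

lemma eta0_eq' {n : ℕ} (C : Finset (Fin n → ℝ)) (hne : C.Nonempty) (v : Fin n → ℝ) :
    eta0 (convexHull ℝ (C : Set (Fin n → ℝ))) v = C.sup' hne (fun q => v ⬝ᵥ (-q)) := by
  apply IsGreatest.csSup_eq
  constructor
  · obtain ⟨q₀, hq₀, hB⟩ := Finset.exists_mem_eq_sup' hne (fun q => v ⬝ᵥ (-q))
    exact ⟨q₀, subset_convexHull ℝ _ hq₀, hB.symm⟩
  · rintro y ⟨q, hq, rfl⟩
    exact hull_le_sup'' C hne v q hq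

lemma dot_sum' {n : ℕ} (x : Fin n → ℝ) {ι : Type*} (t : Finset ι) (f : ι → Fin n → ℝ) :
    x ⬝ᵥ (∑ g ∈ t, f g) = ∑ g ∈ t, x ⬝ᵥ f g := by
  induction t using Finset.cons_induction with
  | empty => simp
  | cons a s ha ih => simp [Finset.sum_cons, dotProduct_add, ih]

section Phi

variable {n k : ℕ} (C : Fin k → Finset (Fin n → ℝ)) (hne : ∀ i, (C i).Nonempty)
  (hlat : ∀ i, ∀ x ∈ C i, IsLatticePt x)
  (M : Fin k → Set (Fin n → ℝ)) (hM : ∀ i, M i = convexHull ℝ ((C i : Set (Fin n → ℝ))))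

include hne hM in
lemma phi_eq_sup' (v : Fin n → ℝ) (i : Fin k) :
    phiMap M v i = (C i).sup' (hne i) (fun q => v ⬝ᵥ (-q)) := by
  rw [phiMap, hM i, eta0_eq' (C i) (hne i) v]

include hne hM in
lemma phi_zero' (i : Fin k) : phiMap M (0 : Fin n → ℝ) i = 0 := by
  rw [phi_eq_sup' C hne M hM]
  simp [zero_dotProduct]

include hne hM in
lemma phi_subadd' (x y : Fin n → ℝ) (i : Fin k) :
    phiMap M (x + y) i ≤ phiMap M x i + phiMap M y i := by
  rw [phi_eq_sup' C hne M hM, phi_eq_sup' C hne M hM, phi_eq_sup' C hne M hM]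
  apply Finset.sup'_le
  intro q hq
  rw [add_dotProduct]
  exact add_le_add (Finset.le_sup' (fun q => x ⬝ᵥ (-q)) hq) (Finset.le_sup' (fun q => y ⬝ᵥ (-q)) hq)

include hne hlat hM in
lemma phi_lattice' {v : Fin n → ℝ} (hv : IsLatticePt v) (i : Fin k) :
    ∃ z : ℤ, phiMap M v i = (z : ℝ) := by
  rw [phi_eq_sup' C hne M hM]
  obtain ⟨q₀, hq₀, hB⟩ := Finset.exists_mem_eq_sup' (hne i) (fun q => v ⬝ᵥ (-q))
  obtain ⟨z, hz⟩ := dot_lattice' hv (lattice_neg' (hlat i q₀ hq₀))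
  exact ⟨z, by rw [hB, hz]⟩

include hne hlat hM in
lemma dual_iff' (σt : Set ((Fin n → ℝ) × (Fin k → ℝ)))
    (hσt : σt = coneGen (⋃ i : Fin k,
      (fun q => (q, (Pi.single i (1 : ℝ) : Fin k → ℝ))) '' {q ∈ M i | IsLatticePt q}))
    (x : (Fin n → ℝ) × (Fin k → ℝ)) :
    x ∈ dualConeNK σt ↔ ∀ i, phiMap M x.1 i ≤ x.2 i := by
  constructor
  · intro hx i
    have key : ∀ q ∈ C i, x.1 ⬝ᵥ (-q) ≤ x.2 i := by
      intro q hq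
      have hqM : q ∈ M i := by rw [hM i]; exact subset_convexHull ℝ _ hq
      have hgen : ((q, (Pi.single i (1:ℝ) : Fin k → ℝ)) : (Fin n → ℝ) × (Fin k → ℝ)) ∈ σt := by
        rw [hσt]
        refine ⟨{(q, (Pi.single i (1:ℝ) : Fin k → ℝ))}, fun _ => 1, ?_,
          fun _ _ => zero_le_one, by simp⟩
        intro z hz
        simp only [Finset.coe_singleton, Set.mem_singleton_iff] at hz
        subst hz
        exact Set.mem_iUnion.2 ⟨i, ⟨q, ⟨hqM, hlat i q hq⟩, rfl⟩⟩
      have := hx _ hgen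
      simp only [dotProduct_single, mul_one] at this
      rw [dotProduct_neg]
      linarith
    rw [phi_eq_sup' C hne M hM]
    exact Finset.sup'_le (hne i) _ key
  · intro hφ u hu
    rw [hσt] at hu
    obtain ⟨t, c, hts, hc, rfl⟩ := hu
    rw [Prod.fst_sum, Prod.snd_sum, dot_sum', dot_sum', ← Finset.sum_add_distrib]
    apply Finset.sum_nonneg
    intro g hg
    obtain ⟨i, q, ⟨hqM, -⟩, hgeq⟩ := by
      have := hts hg
      simpa using this
    have h1 : x.1 ⬝ᵥ (c g • g).1 + x.2 ⬝ᵥ (c g • g).2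
        = c g * (x.1 ⬝ᵥ g.1 + x.2 ⬝ᵥ g.2) := by
      simp [Prod.smul_fst, Prod.smul_snd, dotProduct_smul, mul_add, smul_eq_mul]
    rw [h1]
    apply mul_nonneg (hc g hg)
    have hq2 : x.1 ⬝ᵥ (-g.1) ≤ phiMap M x.1 i := by
      rw [phi_eq_sup' C hne M hM]
      apply hull_le_sup''
      rw [← hM i, ← hgeq]
      exact hqM
    have hsingle : x.2 ⬝ᵥ g.2 = x.2 i := by
      rw [← hgeq]; simp [dotProduct_single]
    rw [dotProduct_neg] at hq2
    have := hφ i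
    rw [hsingle]
    linarith

end Phi

end Aux
/-- With `Q = M₁ + ⋯ + M_k` a Minkowski decomposition of a lattice polytope with
`0 ∈ M_i`, `σ̃ = Cone(⋃_i (M_i ∩ ℤⁿ) × {e_i})`, and `𝓗` a generating set of the
semigroup `σ̃∨ ∩ ℤ^{n+k}`, the set `𝒜` consisting of the vectors `(0, e_i)` together
with all `(v, φ(v))` for `(v,w) ∈ 𝓗` with `v ≠ 0` generates `σ̃∨ ∩ ℤ^{n+k}` as a
semigroup: `ℕ𝒜 = σ̃∨ ∩ ℤ^{n+k}`. -/
theorem stmt6 {n k : ℕ} (C : Fin k → Finset (Fin n → ℝ)) (hne : ∀ i, (C i).Nonempty)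
    (hlat : ∀ i, ∀ x ∈ C i, IsLatticePt x)
    (M : Fin k → Set (Fin n → ℝ)) (hM : ∀ i, M i = convexHull ℝ ((C i : Set (Fin n → ℝ))))
    (h0 : ∀ i, (0 : Fin n → ℝ) ∈ M i)
    (Q : Set (Fin n → ℝ)) (hQ : Q = ∑ i, M i)
    (σt : Set ((Fin n → ℝ) × (Fin k → ℝ)))
    (hσt : σt = coneGen (⋃ i : Fin k,
      (fun q => (q, (Pi.single i (1 : ℝ) : Fin k → ℝ))) '' {q ∈ M i | IsLatticePt q}))
    (S : Set ((Fin n → ℝ) × (Fin k → ℝ)))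
    (hS : S = {x ∈ dualConeNK σt | IsLatticePt x.1 ∧ IsLatticePt x.2})
    (H : Finset ((Fin n → ℝ) × (Fin k → ℝ)))
    (hHsub : (H : Set ((Fin n → ℝ) × (Fin k → ℝ))) ⊆ S)
    (hHgen : natGen (H : Set ((Fin n → ℝ) × (Fin k → ℝ))) = S)
    (A : Set ((Fin n → ℝ) × (Fin k → ℝ)))
    (hA : A = (⋃ i : Fin k, {((0 : Fin n → ℝ), (Pi.single i (1 : ℝ) : Fin k → ℝ))}) ∪
      ((fun p => (p.1, phiMap M p.1)) '' {p ∈ (H : Set ((Fin n → ℝ) × (Fin k → ℝ))) | p.1 ≠ 0})) :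
    natGen A = S := by
  classical
  have hSiff : ∀ x : (Fin n → ℝ) × (Fin k → ℝ),
      x ∈ S ↔ (IsLatticePt x.1 ∧ IsLatticePt x.2 ∧ ∀ i, phiMap M x.1 i ≤ x.2 i) := by
    intro x
    rw [hS]
    constructor
    · rintro ⟨hd, h1, h2⟩
      exact ⟨h1, h2, (dual_iff' C hne hlat M hM σt hσt x).1 hd⟩
    · rintro ⟨h1, h2, hφ⟩
      exact ⟨(dual_iff' C hne hlat M hM σt hσt x).2 hφ, h1, h2⟩
  have hS0 : (0 : (Fin n → ℝ) × (Fin k → ℝ)) ∈ S := by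
    rw [hSiff]
    refine ⟨lattice_zero', lattice_zero', fun i => ?_⟩
    simpa using (phi_zero' C hne M hM i).le
  have hSadd : ∀ {x y : (Fin n → ℝ) × (Fin k → ℝ)}, x ∈ S → y ∈ S → x + y ∈ S := by
    intro x y hx hy
    rw [hSiff] at hx hy ⊢
    obtain ⟨hx1, hx2, hxφ⟩ := hx
    obtain ⟨hy1, hy2, hyφ⟩ := hy
    refine ⟨lattice_add' hx1 hy1, lattice_add' hx2 hy2, fun i => ?_⟩
    have h1 : phiMap M (x.1 + y.1) i ≤ phiMap M x.1 i + phiMap M y.1 i :=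
      phi_subadd' C hne M hM x.1 y.1 i
    have h2 := hxφ i
    have h3 := hyφ i
    show phiMap M (x + y).1 i ≤ (x + y).2 i
    rw [Prod.fst_add, Prod.snd_add, Pi.add_apply]
    linarith
  have hSnsmul : ∀ {x : (Fin n → ℝ) × (Fin k → ℝ)}, x ∈ S → ∀ m : ℕ, m • x ∈ S := by
    intro x hx m
    induction m with
    | zero => simpa using hS0
    | succ m ih => rw [succ_nsmul]; exact hSadd ih hx
  have hAS : A ⊆ S := by
    rw [hA]
    rintro a (ha | ⟨p, ⟨hpH, hp1⟩, rfl⟩)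
    · obtain ⟨i, hi⟩ := Set.mem_iUnion.1 ha
      rw [Set.mem_singleton_iff] at hi
      subst hi
      rw [hSiff]
      refine ⟨lattice_zero', ?_, fun j => ?_⟩
      · intro j
        by_cases hji : j = i
        · exact ⟨1, by subst hji; simp⟩
        · exact ⟨0, by simp [Pi.single_eq_of_ne hji]⟩
      · have h0' : phiMap M (((0 : Fin n → ℝ), Pi.single i (1:ℝ)) :
            (Fin n → ℝ) × (Fin k → ℝ)).1 j = 0 := phi_zero' C hne M hM j
        rw [h0']
        by_cases hji : j = i
        · subst hji; simp
        · simp [Pi.single_eq_of_ne hji]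
    · have hpS := (hSiff p).1 (hHsub hpH)
      obtain ⟨h1, h2, hφ⟩ := hpS
      rw [hSiff]
      exact ⟨h1, fun j => phi_lattice' C hne hlat M hM h1 j, fun i => le_refl _⟩
  ext x
  constructor
  · rintro ⟨t, c, hts, rfl⟩
    refine Finset.sum_induction _ (· ∈ S) (fun a b ha hb => hSadd ha hb) hS0 ?_
    intro v hv
    exact hSnsmul (hAS (hts hv)) (c v)
  · intro hx
    obtain ⟨t, c, htH, hxe⟩ : x ∈ natGen (H : Set ((Fin n → ℝ) × (Fin k → ℝ))) := by
      rw [hHgen]; exact hx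
    set t' := t.filter (fun p => p.1 ≠ 0) with ht'
    set y := ∑ p ∈ t', c p • ((p.1, phiMap M p.1) : (Fin n → ℝ) × (Fin k → ℝ)) with hy
    have hyA : y ∈ natGen A := by
      refine Finset.sum_induction _ (· ∈ natGen A)
        (fun a b ha hb => natGen_add' ha hb) (natGen_zero' A) ?_
      intro p hp
      apply smul_mem_natGen'
      rw [hA]
      exact Or.inr ⟨p, ⟨htH (Finset.filter_subset _ _ hp), (Finset.mem_filter.1 hp).2⟩, rfl⟩
    have hpS : ∀ p ∈ t, IsLatticePt p.1 ∧ IsLatticePt p.2 ∧ ∀ i, phiMap M p.1 i ≤ p.2 i :=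
      fun p hp => (hSiff p).1 (hHsub (htH hp))
    obtain ⟨hxl1, hxl2, hxφ⟩ := (hSiff x).1 hx
    -- component formulas
    have hx1 : x.1 = ∑ p ∈ t, c p • p.1 := by
      rw [hxe, Prod.fst_sum]
      exact Finset.sum_congr rfl fun p _ => rfl
    have hy1 : y.1 = ∑ p ∈ t', c p • p.1 := by
      rw [hy, Prod.fst_sum]
      exact Finset.sum_congr rfl fun p _ => rfl
    have hfsteq : y.1 = x.1 := by
      rw [hx1, hy1]
      apply Finset.sum_subset (Finset.filter_subset _ t)
      intro p hp hnp
      have hp0 : p.1 = 0 := by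
        by_contra h
        exact hnp (Finset.mem_filter.2 ⟨hp, h⟩)
      rw [hp0, smul_zero]
    have hx2 : ∀ j, x.2 j = ∑ p ∈ t, (c p : ℝ) * p.2 j := by
      intro j
      rw [hxe, Prod.snd_sum, Finset.sum_apply]
      exact Finset.sum_congr rfl fun p _ => by
        simp [Prod.smul_snd, Pi.smul_apply, nsmul_eq_mul]
    have hy2 : ∀ j, y.2 j = ∑ p ∈ t', (c p : ℝ) * phiMap M p.1 j := by
      intro j
      rw [hy, Prod.snd_sum, Finset.sum_apply]
      exact Finset.sum_congr rfl fun p _ => by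
        simp [Prod.smul_snd, Pi.smul_apply, nsmul_eq_mul]
    -- y.2 j is an integer
    have hy2int : ∀ j, ∃ z : ℤ, y.2 j = (z : ℝ) := by
      intro j
      rw [hy2 j]
      apply isInt_sum
      intro p hp
      obtain ⟨w, hw⟩ := phi_lattice' C hne hlat M hM
        (hpS p (Finset.filter_subset _ t hp)).1 j
      exact ⟨(c p : ℤ) * w, by rw [hw]; push_cast; ring⟩
    -- y.2 ≤ x.2
    have hle : ∀ j, y.2 j ≤ x.2 j := by
      intro j
      rw [hy2 j, hx2 j]
      calc ∑ p ∈ t', (c p : ℝ) * phiMap M p.1 j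
          ≤ ∑ p ∈ t', (c p : ℝ) * p.2 j := by
            apply Finset.sum_le_sum
            intro p hp
            exact mul_le_mul_of_nonneg_left
              ((hpS p (Finset.filter_subset _ t hp)).2.2 j) (by positivity)
        _ ≤ ∑ p ∈ t, (c p : ℝ) * p.2 j := by
            apply Finset.sum_le_sum_of_subset_of_nonneg (Finset.filter_subset _ t)
            intro p hp hnp
            have hp0 : p.1 = 0 := by
              by_contra h
              exact hnp (Finset.mem_filter.2 ⟨hp, h⟩)
            have h2 : (0:ℝ) ≤ p.2 j := by
              have := (hpS p hp).2.2 j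
              rw [hp0, phi_zero' C hne M hM j] at this
              exact this
            positivity
    have hm : ∀ j, ∃ z : ℕ, x.2 j - y.2 j = (z : ℝ) := by
      intro j
      obtain ⟨zx, hzx⟩ := hxl2 j
      obtain ⟨zy, hzy⟩ := hy2int j
      have hnn : (0:ℤ) ≤ zx - zy := by
        have h1 : (0:ℝ) ≤ ((zx - zy : ℤ) : ℝ) := by
          push_cast
          rw [← hzx, ← hzy]
          linarith [hle j]
        exact_mod_cast h1
      refine ⟨(zx - zy).toNat, ?_⟩
      have hcast : (((zx - zy).toNat : ℕ) : ℝ) = ((zx - zy : ℤ) : ℝ) :=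
        mod_cast congrArg (Int.cast : ℤ → ℝ) (Int.toNat_of_nonneg hnn)
      rw [hzx, hzy, hcast]
      push_cast
      ring
    choose z hz using hm
    set r := ∑ i : Fin k, z i • (((0 : Fin n → ℝ), Pi.single i (1:ℝ)) : (Fin n → ℝ) × (Fin k → ℝ))
      with hr
    have hrA : r ∈ natGen A := by
      refine Finset.sum_induction _ (· ∈ natGen A)
        (fun a b ha hb => natGen_add' ha hb) (natGen_zero' A) ?_
      intro i _
      apply smul_mem_natGen'
      rw [hA]
      exact Or.inl (Set.mem_iUnion.2 ⟨i, rfl⟩)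
    have hr1 : r.1 = 0 := by
      rw [hr, Prod.fst_sum]
      simp
    have hr2 : ∀ j, r.2 j = (z j : ℝ) := by
      intro j
      rw [hr, Prod.snd_sum, Finset.sum_apply]
      have : ∀ i : Fin k, ((z i • (((0 : Fin n → ℝ), Pi.single i (1:ℝ)) :
          (Fin n → ℝ) × (Fin k → ℝ))).2) j = if j = i then (z i : ℝ) else 0 := by
        intro i
        simp [Prod.smul_snd, Pi.smul_apply, Pi.single_apply, nsmul_eq_mul, mul_ite]
      rw [Finset.sum_congr rfl fun i _ => this i]
      simp
    have hxyr : x = y + r := by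
      refine Prod.ext ?_ ?_
      · rw [Prod.fst_add, hr1, add_zero, hfsteq]
      · funext j
        rw [Prod.snd_add, Pi.add_apply, hr2 j, ← hz j]
        ring
    rw [hxyr]
    exact natGen_add' hyA hrA
end

section
/- Let Q = M₁ + ⋯ + M_k ⊆ ℝ^n be an admissible Minkowski decomposition with M_i having non-zero vertices v_{i,1},…,v_{i,m_i}. Define the Laurent polynomial 𝔓𝔒(z₁,…,z_{n+1}) = z_{n+1} ∏_{i=1}^k (1 + Σ_{j=1}^{m_i} z^{v_{i,j}}), where z^v = z₁^{v₁}⋯z_n^{v_n}. Then for K* equal to the units of an integral domain, 𝔓𝔒 has a critical point in (K*)^{n+1} if and only if there exist distinct i, j ∈ {1,…,k} such that the system P_i = P_j = 0 has a solution in (K*)^{n+1}, where P_i = 1 + Σ_{l=1}^{m_i} z^{v_{i,l}}. -/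
noncomputable section

/-- Laurent polynomials in `N` variables over `K`, as the monoid algebra on `ℤ^N`. -/
abbrev LaurentPoly (K : Type*) [CommRing K] (N : ℕ) := AddMonoidAlgebra K (Fin N → ℤ)

/-- Evaluation of a Laurent polynomial at a point of `(K*)^N` (units of `K`). -/
def lEval {K : Type*} [CommRing K] {N : ℕ} (z : Fin N → Kˣ) (f : LaurentPoly K N) : K :=
  f.coeff.sum fun u a => a * ∏ i, ((z i ^ u i : Kˣ) : K)

/-- The formal partial derivative `∂/∂z_m` of a Laurent polynomial. -/
def lDeriv {K : Type*} [CommRing K] {N : ℕ} (m : Fin N) (f : LaurentPoly K N) :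
    LaurentPoly K N :=
  f.coeff.sum fun u a => AddMonoidAlgebra.single (u - Pi.single m 1) ((u m : K) * a)

/-- The factor `P_i = 1 + Σ_j z^{v_{i,j}}`, viewed as a Laurent polynomial in `n + 1`
variables (the extra last variable `z_{n+1}` does not occur). -/
def Pfac {K : Type*} [CommRing K] {n mi : ℕ} (vi : Fin mi → (Fin n → ℤ)) :
    LaurentPoly K (n + 1) :=
  1 + ∑ j, AddMonoidAlgebra.single (Fin.snoc (vi j) 0) (1 : K)

/-- The potential `𝔓𝔒 = z_{n+1} ∏_i (1 + Σ_j z^{v_{i,j}})`. -/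
def Wpot {K : Type*} [CommRing K] {n k : ℕ} {m : Fin k → ℕ}
    (v : (i : Fin k) → Fin (m i) → (Fin n → ℤ)) : LaurentPoly K (n + 1) :=
  AddMonoidAlgebra.single (Pi.single (Fin.last n) (1 : ℤ) : Fin (n + 1) → ℤ) (1 : K) * ∏ i, Pfac (v i)

/-!
At a critical point `z` the derivative in `z_{n+1}` gives `∏ P_i(z) = 0`, so some `P_i(z)`
vanishes, and the derivative in `z_m` (`m ≤ n`) is `z_{n+1}` times
`Σ_i (∏_{j ≠ i} P_j(z)) ∂_m P_i(z)`. If no second factor vanishes, this forces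
`∂_m P_i(z) = 0` for all `m`, i.e. `Σ_j z^{v_{i,j}} v_{i,j} = 0`; since the `v_{i,j}` are part
of a `ℤ`-basis they stay linearly independent over `K`, so all `z^{v_{i,j}}` vanish and
`P_i(z) = 1`, a contradiction. Conversely, two vanishing factors kill every term.
-/

theorem Derivation.leibniz_finset_prod {R A M ι : Type*} [CommSemiring R] [CommSemiring A]
    [Algebra R A] [AddCommMonoid M] [Module A M] [Module R M] [DecidableEq ι]
    (D : Derivation R A M) (s : Finset ι) (f : ι → A) :
    D (∏ i ∈ s, f i) = ∑ i ∈ s, (∏ j ∈ s.erase i, f j) • D (f i) := by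
  induction s using Finset.induction_on with
  | empty => simp
  | insert a s ha ih =>
    rw [Finset.prod_insert ha, D.leibniz, ih, Finset.sum_insert ha, Finset.erase_insert ha,
      Finset.smul_sum, add_comm]
    congr 1
    refine Finset.sum_congr rfl fun i hi => ?_
    have hai : a ≠ i := fun h => ha (h ▸ hi)
    rw [Finset.erase_insert_of_ne hai, Finset.prod_insert fun h => ha (Finset.mem_of_mem_erase h),
      smul_smul]

section ProdErase

variable {ι R : Type*} [CommSemiring R] [DecidableEq ι] {s : Finset ι} {f g : ι → R} {i : ι}

theorem Finset.sum_prod_erase_mul_of_eq_zero (hi : i ∈ s) (hfi : f i = 0) :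
    ∑ a ∈ s, (∏ b ∈ s.erase a, f b) * g a = (∏ b ∈ s.erase i, f b) * g i := by
  refine Finset.sum_eq_single_of_mem i hi fun a _ hai => ?_
  rw [Finset.prod_eq_zero (Finset.mem_erase.mpr ⟨Ne.symm hai, hi⟩) hfi, zero_mul]

theorem Finset.sum_prod_erase_mul_of_eq_zero_of_eq_zero {j : ι} (hi : i ∈ s) (hj : j ∈ s)
    (hij : i ≠ j) (hfi : f i = 0) (hfj : f j = 0) :
    ∑ a ∈ s, (∏ b ∈ s.erase a, f b) * g a = 0 := by
  rw [Finset.sum_prod_erase_mul_of_eq_zero hi hfi,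
    Finset.prod_eq_zero (Finset.mem_erase.mpr ⟨Ne.symm hij, hj⟩) hfj, zero_mul]

end ProdErase

theorem linearIndependent_intCast_rows_of_isUnit_det {R ι κ : Type*} [CommRing R] [Fintype ι]
    [DecidableEq ι] {B : Matrix ι ι ℤ} (hB : IsUnit B.det) {e : κ → ι} (he : e.Injective)
    {w : κ → ι → ℤ} (hw : ∀ j, B (e j) = w j) :
    LinearIndependent R fun j l => (w j l : R) := by
  have hunit : IsUnit (B.map (Int.cast : ℤ → R)) := by
    rw [Matrix.isUnit_iff_isUnit_det]
    exact (Int.castRingHom R).map_det B ▸ hB.map _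
  convert (Matrix.linearIndependent_rows_of_isUnit hunit).comp e he using 1
  ext j l
  simp [← hw]

section Evaluation

variable {K : Type*} [CommRing K] {N : ℕ}

def monomialValue (z : Fin N → Kˣ) (u : Fin N → ℤ) : Kˣ := ∏ i, z i ^ u i

theorem monomialValue_add (z : Fin N → Kˣ) (u w : Fin N → ℤ) :
    monomialValue z (u + w) = monomialValue z u * monomialValue z w := by
  simp [monomialValue, zpow_add, Finset.prod_mul_distrib]

theorem monomialValue_sub (z : Fin N → Kˣ) (u w : Fin N → ℤ) :
    monomialValue z (u - w) = monomialValue z u * (monomialValue z w)⁻¹ := by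
  rw [eq_mul_inv_iff_mul_eq, ← monomialValue_add, sub_add_cancel]

theorem monomialValue_single (z : Fin N → Kˣ) (d : Fin N) :
    monomialValue z (Pi.single d 1) = z d := by
  rw [monomialValue, Finset.prod_eq_single d (fun i _ hi => by simp [hi]) (by simp)]
  simp

def lEvalAlgHom (z : Fin N → Kˣ) : LaurentPoly K N →ₐ[K] K :=
  AddMonoidAlgebra.lift K K (Fin N → ℤ)
    { toFun := fun u => (monomialValue z u.toAdd : K)
      map_one' := by simp [monomialValue]
      map_mul' := fun u w => by simp [monomialValue_add] }

theorem lEvalAlgHom_apply (z : Fin N → Kˣ) (f : LaurentPoly K N) :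
    lEvalAlgHom z f = lEval z f := by
  rw [lEvalAlgHom, AddMonoidAlgebra.lift_apply, lEval]
  exact Finsupp.sum_congr fun u _ => by simp [monomialValue, smul_eq_mul]

theorem lEval_add (z : Fin N → Kˣ) (f g : LaurentPoly K N) :
    lEval z (f + g) = lEval z f + lEval z g := by
  simp only [← lEvalAlgHom_apply, map_add]

theorem lEval_mul (z : Fin N → Kˣ) (f g : LaurentPoly K N) :
    lEval z (f * g) = lEval z f * lEval z g := by
  simp only [← lEvalAlgHom_apply, map_mul]

theorem lEval_one (z : Fin N → Kˣ) : lEval z (1 : LaurentPoly K N) = 1 := by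
  simp only [← lEvalAlgHom_apply, map_one]

theorem lEval_sum {ι : Type*} (z : Fin N → Kˣ) (s : Finset ι) (f : ι → LaurentPoly K N) :
    lEval z (∑ i ∈ s, f i) = ∑ i ∈ s, lEval z (f i) := by
  simp only [← lEvalAlgHom_apply, map_sum]

theorem lEval_prod {ι : Type*} (z : Fin N → Kˣ) (s : Finset ι) (f : ι → LaurentPoly K N) :
    lEval z (∏ i ∈ s, f i) = ∏ i ∈ s, lEval z (f i) := by
  simp only [← lEvalAlgHom_apply, map_prod]

theorem lEval_single (z : Fin N → Kˣ) (u : Fin N → ℤ) (a : K) :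
    lEval z (AddMonoidAlgebra.single u a) = a * monomialValue z u := by
  rw [← lEvalAlgHom_apply, lEvalAlgHom, AddMonoidAlgebra.lift_single]
  simp [smul_eq_mul]

end Evaluation

section Derivative

variable {K : Type*} [CommRing K] {N : ℕ}

theorem lDeriv_single (d : Fin N) (u : Fin N → ℤ) (a : K) :
    lDeriv d (AddMonoidAlgebra.single u a) =
      AddMonoidAlgebra.single (u - Pi.single d 1) ((u d : K) * a) := by
  rw [lDeriv, AddMonoidAlgebra.coeff_single, Finsupp.sum_single_index (by simp)]

theorem lDeriv_add (d : Fin N) (f g : LaurentPoly K N) :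
    lDeriv d (f + g) = lDeriv d f + lDeriv d g := by
  rw [lDeriv, AddMonoidAlgebra.coeff_add]
  exact Finsupp.sum_add_index' (by simp) fun u a b => by rw [mul_add, AddMonoidAlgebra.single_add]

theorem lDeriv_mul (d : Fin N) (f g : LaurentPoly K N) :
    lDeriv d (f * g) = f * lDeriv d g + g * lDeriv d f := by
  induction f using AddMonoidAlgebra.induction_linear with
  | zero => simp [lDeriv]
  | add f₁ f₂ h₁ h₂ => rw [add_mul, lDeriv_add, h₁, h₂, lDeriv_add]; ring
  | single u a =>
    induction g using AddMonoidAlgebra.induction_linear with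
    | zero => simp [lDeriv]
    | add g₁ g₂ h₁ h₂ => rw [mul_add, lDeriv_add, h₁, h₂, lDeriv_add]; ring
    | single w b =>
      simp only [AddMonoidAlgebra.single_mul_single, lDeriv_single]
      rw [add_sub_assoc', add_sub_assoc', add_comm w u, ← AddMonoidAlgebra.single_add]
      congr 1
      push_cast [Pi.add_apply]
      ring

def lDerivation (d : Fin N) : Derivation K (LaurentPoly K N) (LaurentPoly K N) :=
  Derivation.mk'
    { toFun := lDeriv d
      map_add' := lDeriv_add d
      map_smul' := fun c f => by
        induction f using AddMonoidAlgebra.induction_linear with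
        | zero => simp [lDeriv]
        | add f g hf hg => rw [smul_add, lDeriv_add, hf, hg, lDeriv_add, smul_add]
        | single u a =>
          simp only [AddMonoidAlgebra.smul_single', lDeriv_single, RingHom.id_apply]
          ring_nf }
    fun f g => lDeriv_mul d f g

theorem lDerivation_apply (d : Fin N) (f : LaurentPoly K N) : lDerivation d f = lDeriv d f :=
  rfl

end Derivative

section Potential

variable {K : Type*} [CommRing K] {n : ℕ}

theorem lEval_Pfac (z : Fin (n + 1) → Kˣ) {mi : ℕ} (vi : Fin mi → Fin n → ℤ) :
    lEval z (Pfac (K := K) vi) = 1 + ∑ j, (monomialValue z (Fin.snoc (vi j) 0) : K) := by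
  simp only [Pfac, lEval_add, lEval_one, lEval_sum, lEval_single, one_mul]

theorem lDeriv_last_Pfac {mi : ℕ} (vi : Fin mi → Fin n → ℤ) :
    lDeriv (Fin.last n) (Pfac (K := K) vi) = 0 := by
  rw [Pfac, ← lDerivation_apply, map_add, Derivation.map_one_eq_zero, zero_add, map_sum]
  refine Finset.sum_eq_zero fun j _ => ?_
  simp [lDerivation_apply, lDeriv_single]

theorem lEval_lDeriv_castSucc_Pfac (z : Fin (n + 1) → Kˣ) {mi : ℕ} (vi : Fin mi → Fin n → ℤ)
    (m : Fin n) :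
    lEval z (lDeriv m.castSucc (Pfac (K := K) vi)) =
      ((z m.castSucc)⁻¹ : Kˣ) * ∑ j, (vi j m : K) * monomialValue z (Fin.snoc (vi j) 0) := by
  rw [Pfac, ← lDerivation_apply, map_add, Derivation.map_one_eq_zero, zero_add, map_sum,
    lEval_sum, Finset.mul_sum]
  refine Finset.sum_congr rfl fun j _ => ?_
  simp only [lDerivation_apply, lDeriv_single, lEval_single, Fin.snoc_castSucc,
    monomialValue_sub, monomialValue_single, Units.val_mul]
  ring

theorem lEval_lDeriv_last_Wpot {k : ℕ} {m : Fin k → ℕ}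
    (v : (i : Fin k) → Fin (m i) → (Fin n → ℤ)) (z : Fin (n + 1) → Kˣ) :
    lEval z (lDeriv (Fin.last n) (Wpot (K := K) v)) = ∏ i, lEval z (Pfac (v i)) := by
  rw [Wpot, ← lDerivation_apply, Derivation.leibniz, Derivation.leibniz_finset_prod]
  simp [lDerivation_apply, lDeriv_last_Pfac, lDeriv_single, ← AddMonoidAlgebra.one_def,
    lEval_prod]

theorem lEval_lDeriv_castSucc_Wpot {k : ℕ} {m : Fin k → ℕ}
    (v : (i : Fin k) → Fin (m i) → (Fin n → ℤ)) (z : Fin (n + 1) → Kˣ) (d : Fin n) :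
    lEval z (lDeriv d.castSucc (Wpot (K := K) v)) = z (Fin.last n) *
      ∑ i, (∏ j ∈ Finset.univ.erase i, lEval z (Pfac (v j))) *
        lEval z (lDeriv d.castSucc (Pfac (v i))) := by
  rw [Wpot, ← lDerivation_apply, Derivation.leibniz, Derivation.leibniz_finset_prod]
  simp [lDerivation_apply, lDeriv_single, lEval_mul, lEval_sum, lEval_prod, lEval_single,
    monomialValue_single]

theorem lEval_Pfac_ne_zero_of_lEval_lDeriv_eq_zero [Nontrivial K] {mi : ℕ}
    {vi : Fin mi → Fin n → ℤ} (hv : LinearIndependent K fun j l => (vi j l : K))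
    (z : Fin (n + 1) → Kˣ) (hz : ∀ d : Fin n, lEval z (lDeriv d.castSucc (Pfac (K := K) vi)) = 0) :
    lEval z (Pfac (K := K) vi) ≠ 0 := by
  set a : Fin mi → K := fun j => monomialValue z (Fin.snoc (vi j) 0)
  have hrel : ∑ j, a j • (fun l => (vi j l : K)) = 0 := by
    ext d
    have h := hz d
    rw [lEval_lDeriv_castSucc_Pfac, Units.mul_right_eq_zero] at h
    simpa [a, mul_comm] using h
  have ha : ∀ j, a j = 0 := Fintype.linearIndependent_iff.mp hv a hrel
  rw [lEval_Pfac, Finset.sum_eq_zero fun j _ => ha j, add_zero]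
  exact one_ne_zero

end Potential

/-- Let `Q = M₁ + ⋯ + M_k` be an admissible Minkowski decomposition, `M_i` having
non-zero vertices `v_{i,1},…,v_{i,m_i}` which extend to a `ℤ`-basis of `ℤⁿ`.  Then the
potential `𝔓𝔒 = z_{n+1} ∏_i P_i`, `P_i = 1 + Σ_j z^{v_{i,j}}`, has a critical point in
`(K*)^{n+1}` (units of the integral domain `K`) if and only if there are distinct
`i ≠ j` such that the system `P_i = P_j = 0` has a solution in `(K*)^{n+1}`. -/
theorem stmt10 {K : Type*} [CommRing K] [IsDomain K] {n k : ℕ} {m : Fin k → ℕ}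
    (hmn : ∀ i, m i ≤ n) (v : (i : Fin k) → Fin (m i) → (Fin n → ℤ))
    (hadm : ∀ i, ∃ B : Matrix (Fin n) (Fin n) ℤ,
      (∀ j : Fin (m i), (fun l => B (Fin.castLE (hmn i) j) l) = v i j) ∧ IsUnit B.det) :
    (∃ z : Fin (n + 1) → Kˣ, ∀ d : Fin (n + 1), lEval z (lDeriv d (Wpot v)) = 0) ↔
    (∃ i j : Fin k, i ≠ j ∧ ∃ z : Fin (n + 1) → Kˣ,
      lEval z (Pfac (v i)) = 0 ∧ lEval z (Pfac (v j)) = 0) := by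
  have hlin : ∀ i, LinearIndependent K fun j l => (v i j l : K) := fun i =>
    let ⟨_, hrows, hdet⟩ := hadm i
    linearIndependent_intCast_rows_of_isUnit_det hdet (Fin.castLE_injective (hmn i)) hrows
  constructor
  · rintro ⟨z, hz⟩
    obtain ⟨i, -, hi⟩ := Finset.prod_eq_zero_iff.mp <| lEval_lDeriv_last_Wpot v z ▸ hz (Fin.last n)
    by_contra! honly
    refine lEval_Pfac_ne_zero_of_lEval_lDeriv_eq_zero (hlin i) z (fun d => ?_) hi
    have hrest : ∏ j ∈ Finset.univ.erase i, lEval z (Pfac (v j)) ≠ 0 :=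
      Finset.prod_ne_zero_iff.mpr fun j hj => honly i j (Finset.ne_of_mem_erase hj).symm z hi
    have hd := hz d.castSucc
    rw [lEval_lDeriv_castSucc_Wpot, Finset.sum_prod_erase_mul_of_eq_zero (Finset.mem_univ i) hi]
      at hd
    simpa [hrest] using hd
  · rintro ⟨i, j, hij, z, hi, hj⟩
    refine ⟨z, Fin.lastCases ?_ fun d => ?_⟩
    · rw [lEval_lDeriv_last_Wpot]
      exact Finset.prod_eq_zero (Finset.mem_univ i) hi
    · rw [lEval_lDeriv_castSucc_Wpot, Finset.sum_prod_erase_mul_of_eq_zero_of_eq_zero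
        (Finset.mem_univ i) (Finset.mem_univ j) hij hi hj, mul_zero]

end
end

section
/- The Laurent polynomial W(z₁,z₂,z₃) = z₃(1 + z₁ + z₁z₂)(1 + z₂ + z₁z₂) has exactly the critical points in (ℂ*)³ given by z₁ = z₂ = ω with ω a primitive cube root of unity (ω² + ω + 1 = 0) and z₃ ∈ ℂ* arbitrary. -/
/-!
Writing `F a b = 1 + a + a b`, the function is `W = c · F(a,b) · F(b,a)`, symmetric in `a, b`.
Since `c ≠ 0`, criticality says `∂ₐ(F(a,b) F(b,a)) = ∂_b(F(a,b) F(b,a)) = F(a,b) F(b,a) = 0`.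
If one factor vanishes, the corresponding partial derivative forces the other to vanish too
(the alternative `1 + b = 0` would make the first factor equal to `1`), and
`F(a,b) - F(b,a) = a - b` then gives `a = b` with `1 + a + a² = 0`.
-/

section Algebra

variable {R : Type*} [CommRing R]

def factor (a b : R) : R := 1 + a + a * b

def superpotential (a b c : R) : R := c * factor a b * factor b a

theorem superpotential_comm (a b c : R) : superpotential a b c = superpotential b a c := by
  simp only [superpotential]
  ring

theorem eq_and_sq_add_add_one_of_factor_eq_zero {a b : R} (hab : factor a b = 0)
    (hba : factor b a = 0) : b = a ∧ a ^ 2 + a + 1 = 0 := by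
  simp only [factor] at hab hba
  have h : b = a := by linear_combination hba - hab
  subst h
  exact ⟨rfl, by linear_combination hab⟩

variable [IsDomain R]

theorem factor_swap_eq_zero {a b : R} (hab : factor a b = 0)
    (hd : (1 + b) * factor b a + factor a b * b = 0) : factor b a = 0 := by
  have hb : 1 + b ≠ 0 := by
    intro hb
    have hab' : 1 + a + a * b = 0 := hab
    exact one_ne_zero (by linear_combination hab' - a * hb : (1 : R) = 0)
  refine (mul_eq_zero.mp ?_).resolve_left hb
  linear_combination hd - b * hab

theorem critical_equations_iff {a b : R} :
    ((1 + b) * factor b a + factor a b * b = 0 ∧ (1 + a) * factor a b + factor b a * a = 0 ∧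
      factor a b * factor b a = 0) ↔ b = a ∧ a ^ 2 + a + 1 = 0 := by
  constructor
  · rintro ⟨hda, hdb, hprod⟩
    rcases mul_eq_zero.mp hprod with hab | hba
    · exact eq_and_sq_add_add_one_of_factor_eq_zero hab (factor_swap_eq_zero hab hda)
    · exact eq_and_sq_add_add_one_of_factor_eq_zero (factor_swap_eq_zero hba hdb) hba
  · rintro ⟨rfl, ha⟩
    have hbb : factor b b = 0 := by
      simp only [factor]
      linear_combination ha
    simp [hbb]

end Algebra

section Derivatives

variable {𝕜 : Type*} [NontriviallyNormedField 𝕜]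

theorem hasDerivAt_superpotential_fst (a b c : 𝕜) :
    HasDerivAt (fun t => superpotential t b c)
      (c * ((1 + b) * factor b a + factor a b * b)) a := by
  have hab : HasDerivAt (fun t => factor t b) (1 + b) a := by
    simpa [factor] using ((hasDerivAt_id a).const_add 1).fun_add ((hasDerivAt_id a).mul_const b)
  have hba : HasDerivAt (fun t => factor b t) b a := by
    simpa [factor] using ((hasDerivAt_id a).const_mul b).const_add (1 + b)
  exact ((hab.const_mul c).fun_mul hba).congr_deriv (by ring)

theorem hasDerivAt_superpotential_snd (a b c : 𝕜) :
    HasDerivAt (fun t => superpotential a t c)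
      (c * ((1 + a) * factor a b + factor b a * a)) b := by
  simpa only [superpotential_comm a] using hasDerivAt_superpotential_fst b a c

theorem hasDerivAt_superpotential_thd (a b c : 𝕜) :
    HasDerivAt (fun t => superpotential a b t) (factor a b * factor b a) c := by
  simpa [superpotential, mul_assoc] using (hasDerivAt_id c).mul_const (factor a b * factor b a)

end Derivatives

theorem stmt12_general (W : ℂ → ℂ → ℂ → ℂ)
    (hW : W = fun a b c => c * (1 + a + a * b) * (1 + b + a * b))
    (z₁ z₂ z₃ : ℂ) (h₃ : z₃ ≠ 0) :
    (deriv (fun t => W t z₂ z₃) z₁ = 0 ∧ deriv (fun t => W z₁ t z₃) z₂ = 0 ∧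
      deriv (fun t => W z₁ z₂ t) z₃ = 0) ↔
    (z₂ = z₁ ∧ z₁ ^ 2 + z₁ + 1 = 0) := by
  obtain rfl : W = superpotential := by
    rw [hW]
    funext a b c
    simp only [superpotential, factor]
    ring
  rw [(hasDerivAt_superpotential_fst z₁ z₂ z₃).deriv,
    (hasDerivAt_superpotential_snd z₁ z₂ z₃).deriv,
    (hasDerivAt_superpotential_thd z₁ z₂ z₃).deriv, mul_eq_zero, mul_eq_zero,
    or_iff_right h₃, or_iff_right h₃]
  exact critical_equations_iff

/-- The Laurent polynomial `W(z₁,z₂,z₃) = z₃(1 + z₁ + z₁z₂)(1 + z₂ + z₁z₂)` has exactly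
the critical points in `(ℂ*)³` given by `z₁ = z₂ = ω` with `ω² + ω + 1 = 0` (a primitive
cube root of unity) and `z₃ ∈ ℂ*` arbitrary. -/
theorem stmt12 (W : ℂ → ℂ → ℂ → ℂ)
    (hW : W = fun a b c => c * (1 + a + a * b) * (1 + b + a * b))
    (z₁ z₂ z₃ : ℂ) (h₁ : z₁ ≠ 0) (h₂ : z₂ ≠ 0) (h₃ : z₃ ≠ 0) :
    (deriv (fun t => W t z₂ z₃) z₁ = 0 ∧ deriv (fun t => W z₁ t z₃) z₂ = 0 ∧
      deriv (fun t => W z₁ z₂ t) z₃ = 0) ↔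
    (z₂ = z₁ ∧ z₁ ^ 2 + z₁ + 1 = 0) :=
  stmt12_general W hW z₁ z₂ z₃ h₃
end
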